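/- For every ε > 0, the Szlenk derivation map s_ε : K(B_{ℓ∞}) → K(B_{ℓ∞}), F ↦ F'_ε, is Σ⁰₃-measurable: the preimage of every open set is a countable union of countable intersections of open sets. -/

import Mathlib

open Topology

/-- The closed unit ball of `ℓ∞` with its weak* topology, realized as the set of sequences
bounded by `1` with the topology of pointwise (coordinatewise) convergence. -/
def BallInfty : Type := {a : ℕ → ℝ // ∀ n, |a n| ≤ 1}

instance : TopologicalSpace BallInfty := instTopologicalSpaceSubtype

/-- The diameter of a subset of the ball of `ℓ∞`, measured in the `ℓ∞` norm. -/
noncomputable def linftyDiam (S : Set BallInfty) : ℝ :=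
  sSup {d : ℝ | ∃ a ∈ S, ∃ b ∈ S, d = ⨆ n, |a.1 n - b.1 n|}

/-- The Vietoris topology on subsets of a topological space. -/
def vietoris (α : Type*) [TopologicalSpace α] : TopologicalSpace (Set α) :=
  TopologicalSpace.generateFrom
    ({S | ∃ U : Set α, IsOpen U ∧ S = {K | K ⊆ U}} ∪
     {S | ∃ U : Set α, IsOpen U ∧ S = {K | (K ∩ U).Nonempty}})

/-- The hyperspace `K(B_{ℓ∞})` of compact subsets with the Vietoris topology. -/
def KB : Type := {F : Set BallInfty // IsCompact F}

instance : TopologicalSpace KB :=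
  TopologicalSpace.induced Subtype.val (vietoris BallInfty)

/-- The Szlenk derivative `F'_ε` of a subset of the ball of `ℓ∞`. -/
def szlenkD (ε : ℝ) (F : Set BallInfty) : Set BallInfty :=
  {x ∈ F | ∀ U : Set BallInfty, IsOpen U → x ∈ U → ε ≤ linftyDiam (U ∩ F)}

/-!
A point of `F` leaves `F'_ε` exactly when some basic weak*-open set `u` around it has
`diam (u ∩ F) < ε`. By compactness, `F'_ε ⊆ V` is then witnessed by finitely many such `u`
covering `F \ V`, and `F'_ε ∩ C = ∅` (for closed `C`) by finitely many covering `F ∩ C`.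
Moreover `δ < diam (W ∩ F)` holds iff, for some coordinate `n` and rational `q`, `F` meets both
`W ∩ {x | x n < q}` and `W ∩ {x | q + δ < x n}`: a Vietoris-open condition on `F`, whose
negation is `G_δ`. Hence the preimages under `F ↦ F'_ε` of the countably many sets
`{K | K ⊆ ⋃ t}` and `{K | (K ∩ u).Nonempty}` (`t` a finite family of basic sets, `u` basic),
which generate the Vietoris topology on compact sets, are countable unions of `G_δ` sets.
-/

open Set TopologicalSpace Metric

section GδSigma

variable {X : Type*} [TopologicalSpace X]

def IsGδσ (s : Set X) : Prop :=
  ∃ T : Set (Set X), (∀ t ∈ T, IsGδ t) ∧ T.Countable ∧ s = ⋃₀ T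

theorem IsGδ.isGδσ {s : Set X} (hs : IsGδ s) : IsGδσ s :=
  ⟨{s}, by simpa using hs, countable_singleton s, (sUnion_singleton s).symm⟩

theorem IsGδσ.iUnion {ι : Sort*} [Countable ι] {s : ι → Set X} (hs : ∀ i, IsGδσ (s i)) :
    IsGδσ (⋃ i, s i) := by
  choose T hT hTc hTs using hs
  refine ⟨⋃ i, T i, fun t ht => ?_, countable_iUnion hTc, by simp only [sUnion_iUnion, hTs]⟩
  obtain ⟨i, hi⟩ := mem_iUnion.1 ht
  exact hT i t hi

theorem IsGδσ.biUnion {ι : Type*} {I : Set ι} (hI : I.Countable) {s : ι → Set X}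
    (hs : ∀ i ∈ I, IsGδσ (s i)) : IsGδσ (⋃ i ∈ I, s i) := by
  have := hI.to_subtype
  rw [biUnion_eq_iUnion]
  exact .iUnion fun i => hs i i.2

theorem IsGδσ.inter {s t : Set X} (hs : IsGδσ s) (ht : IsGδσ t) : IsGδσ (s ∩ t) := by
  obtain ⟨S, hS, hSc, rfl⟩ := hs
  obtain ⟨T, hT, hTc, rfl⟩ := ht
  rw [sUnion_inter_sUnion]
  exact .biUnion (hSc.prod hTc) fun p hp => ((hS _ hp.1).inter (hT _ hp.2)).isGδσ

theorem IsGδσ.biInter {ι : Type*} {I : Set ι} (hI : I.Finite) {s : ι → Set X}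
    (hs : ∀ i ∈ I, IsGδσ (s i)) : IsGδσ (⋂ i ∈ I, s i) := by
  induction I, hI using Set.Finite.induction_on with
  | empty => simpa using IsGδ.univ.isGδσ
  | insert _ _ ih =>
    rw [biInter_insert]
    exact (hs _ (mem_insert _ _)).inter (ih fun i hi => hs i (mem_insert_of_mem _ hi))

theorem IsGδσ.exists_eq_iUnion_iInter_nat {s : Set X} (hs : IsGδσ s) :
    ∃ V : ℕ → ℕ → Set X, (∀ n m, IsOpen (V n m)) ∧ s = ⋃ n, ⋂ m, V n m := by
  obtain ⟨T, hT, hTc, rfl⟩ := hs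
  rcases T.eq_empty_or_nonempty with rfl | hne
  · refine ⟨fun _ _ => ∅, fun _ _ => isOpen_empty, ?_⟩
    simp only [sUnion_empty, iInter_const, iUnion_empty]
  obtain ⟨g, rfl⟩ := hTc.exists_eq_range hne
  choose V hVo hV using fun n => (hT _ (mem_range_self n)).eq_iInter_nat
  exact ⟨V, hVo, by rw [sUnion_range]; exact iUnion_congr hV⟩

theorem isGδσ_preimage_of_eq_generateFrom {Y : Type*} [tY : TopologicalSpace Y]
    {S : Set (Set Y)} (hS : S.Countable) (hY : tY = generateFrom S) {f : X → Y}
    (hf : ∀ s ∈ S, IsGδσ (f ⁻¹' s)) {U : Set Y} (hU : IsOpen U) :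
    IsGδσ (f ⁻¹' U) := by
  obtain ⟨𝒰, h𝒰, rfl⟩ := (isTopologicalBasis_of_subbasis hY).open_eq_sUnion hU
  have hcount : ((fun F => ⋂₀ F) '' {F : Set (Set Y) | F.Finite ∧ F ⊆ S}).Countable :=
    (countable_ofPred_finite_subset hS).image _
  rw [preimage_sUnion]
  refine .biUnion (hcount.mono h𝒰) fun u hu => ?_
  obtain ⟨F, ⟨hFfin, hFS⟩, rfl⟩ := h𝒰 hu
  rw [preimage_sInter]
  exact .biInter hFfin fun s hs => hf s (hFS hs)

end GδSigma

theorem IsCompact.exists_finite_subfamily_cover {X : Type*} [TopologicalSpace X]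
    {B : Set (Set X)} (hB : ∀ u ∈ B, IsOpen u) {K : Set X} (hK : IsCompact K)
    {P : Set X → Prop} (h : ∀ x ∈ K, ∃ u ∈ B, x ∈ u ∧ P u) :
    ∃ t ⊆ B, t.Finite ∧ (∀ u ∈ t, P u) ∧ K ⊆ ⋃₀ t := by
  obtain ⟨t, htB, htfin, hKt⟩ := hK.elim_finite_subcover_image (b := {u ∈ B | P u}) (c := id)
    (fun u hu => hB u hu.1) fun x hx => by
      obtain ⟨u, hu, hxu, hPu⟩ := h x hx
      exact mem_biUnion ⟨hu, hPu⟩ hxu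
  exact ⟨t, fun u hu => (htB hu).1, htfin, fun u hu => (htB hu).2, by rwa [sUnion_eq_biUnion]⟩

theorem isOpen_sUnion_of_subset_countableBasis {X : Type*} [TopologicalSpace X]
    [SecondCountableTopology X] {t : Set (Set X)} (ht : t ⊆ countableBasis X) :
    IsOpen (⋃₀ t) :=
  isOpen_sUnion fun _ hu => isOpen_of_mem_countableBasis (ht hu)

theorem IsCompact.inter_nonempty_of_forall_thickening {X : Type*} [PseudoMetricSpace X]
    {K C : Set X} (hK : IsCompact K) (hC : IsClosed C)
    (h : ∀ δ > 0, (K ∩ thickening δ C).Nonempty) : (K ∩ C).Nonempty := by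
  by_contra hKC
  obtain ⟨δ, hδ, hdisj⟩ := (disjoint_iff_inter_eq_empty.2
    (not_nonempty_iff_eq_empty.1 hKC)).exists_thickenings hK hC
  exact not_disjoint_iff_nonempty_inter.2 (h δ hδ)
    (hdisj.mono_left (self_subset_thickening hδ K))

namespace BallInfty

theorem isEmbedding_val : IsEmbedding (Subtype.val : BallInfty → ℕ → ℝ) :=
  IsEmbedding.subtypeVal

instance : MetrizableSpace BallInfty := isEmbedding_val.metrizableSpace

instance : SecondCountableTopology BallInfty := isEmbedding_val.secondCountableTopology

theorem continuous_coord (n : ℕ) : Continuous fun x : BallInfty => x.1 n :=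
  (continuous_apply n).comp continuous_subtype_val

theorem isOpen_setOf_coord_lt (n : ℕ) (q : ℝ) : IsOpen {x : BallInfty | x.1 n < q} :=
  isOpen_lt (continuous_coord n) continuous_const

theorem isOpen_setOf_lt_coord (n : ℕ) (q : ℝ) : IsOpen {x : BallInfty | q < x.1 n} :=
  isOpen_lt continuous_const (continuous_coord n)

theorem abs_sub_coord_le_two (a b : BallInfty) (n : ℕ) : |a.1 n - b.1 n| ≤ 2 := by
  have := abs_sub (a.1 n) (b.1 n)
  linarith [a.2 n, b.2 n]

end BallInfty

open BallInfty

local notation "𝓑" => countableBasis BallInfty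

theorem linftyDiam_le_iff {S : Set BallInfty} {δ : ℝ} (hδ : 0 ≤ δ) :
    linftyDiam S ≤ δ ↔ ∀ a ∈ S, ∀ b ∈ S, ∀ n, |a.1 n - b.1 n| ≤ δ := by
  refine ⟨fun h a ha b hb n => ?_, fun h => Real.sSup_le ?_ hδ⟩
  · have hbdd : BddAbove {d : ℝ | ∃ a ∈ S, ∃ b ∈ S, d = ⨆ n, |a.1 n - b.1 n|} :=
      ⟨2, by rintro _ ⟨a, -, b, -, rfl⟩; exact ciSup_le (abs_sub_coord_le_two a b)⟩
    calc |a.1 n - b.1 n| ≤ ⨆ n, |a.1 n - b.1 n| :=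
          le_ciSup ⟨2, forall_mem_range.2 (abs_sub_coord_le_two a b)⟩ n
      _ ≤ linftyDiam S := le_csSup hbdd ⟨a, ha, b, hb, rfl⟩
      _ ≤ δ := h
  · rintro _ ⟨a, ha, b, hb, rfl⟩
    exact ciSup_le (h a ha b hb)

theorem linftyDiam_nonneg (S : Set BallInfty) : 0 ≤ linftyDiam S :=
  Real.sSup_nonneg <| by
    rintro _ ⟨a, -, b, -, rfl⟩
    exact Real.iSup_nonneg fun n => abs_nonneg _

theorem linftyDiam_mono {S T : Set BallInfty} (h : S ⊆ T) : linftyDiam S ≤ linftyDiam T :=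
  (linftyDiam_le_iff (linftyDiam_nonneg T)).2 fun a ha b hb =>
    (linftyDiam_le_iff (linftyDiam_nonneg T)).1 le_rfl a (h ha) b (h hb)

theorem lt_linftyDiam_iff {S : Set BallInfty} {δ : ℝ} (hδ : 0 ≤ δ) :
    δ < linftyDiam S ↔ ∃ (n : ℕ) (q : ℚ),
      (S ∩ {x | x.1 n < q}).Nonempty ∧ (S ∩ {x | q + δ < x.1 n}).Nonempty := by
  rw [← not_le, linftyDiam_le_iff hδ]
  push Not
  constructor
  · rintro ⟨a, ha, b, hb, n, hab⟩
    rcases lt_abs.1 hab with h | h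
    · obtain ⟨q, hbq, hqa⟩ := exists_rat_btwn (show b.1 n < a.1 n - δ by linarith)
      exact ⟨n, q, ⟨b, hb, hbq⟩, a, ha, show q + δ < a.1 n by linarith⟩
    · obtain ⟨q, haq, hqb⟩ := exists_rat_btwn (show a.1 n < b.1 n - δ by linarith)
      exact ⟨n, q, ⟨a, ha, haq⟩, b, hb, show q + δ < b.1 n by linarith⟩
  · rintro ⟨n, q, ⟨a, ha, haq : a.1 n < q⟩, b, hb, hqb : q + δ < b.1 n⟩
    exact ⟨b, hb, a, ha, n, (by linarith : δ < b.1 n - a.1 n).trans_le (le_abs_self _)⟩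

namespace KB

theorem isOpen_setOf_mem {U : Set (Set BallInfty)} (hU : IsOpen[vietoris BallInfty] U) :
    IsOpen {F : KB | F.1 ∈ U} :=
  isOpen_induced (t := vietoris BallInfty) (f := Subtype.val) hU

theorem isOpen_setOf_subset {U : Set BallInfty} (hU : IsOpen U) :
    IsOpen {F : KB | F.1 ⊆ U} :=
  isOpen_setOf_mem (isOpen_generateFrom_of_mem (Or.inl ⟨U, hU, rfl⟩))

theorem isOpen_setOf_inter_nonempty {U : Set BallInfty} (hU : IsOpen U) :
    IsOpen {F : KB | (F.1 ∩ U).Nonempty} :=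
  isOpen_setOf_mem (isOpen_generateFrom_of_mem (Or.inr ⟨U, hU, rfl⟩))

theorem isGδ_setOf_subset {C : Set BallInfty} (hC : IsClosed C) : IsGδ {F : KB | F.1 ⊆ C} := by
  obtain ⟨U, hU, rfl⟩ := hC.isGδ.eq_iInter_nat
  simp only [subset_iInter_iff, ofPred_forall]
  exact .iInter_of_isOpen fun n => isOpen_setOf_subset (hU n)

theorem isGδ_compl_setOf_inter_nonempty {U : Set BallInfty} (hU : IsOpen U) :
    IsGδ {F : KB | (F.1 ∩ U).Nonempty}ᶜ := by
  simpa only [compl_ofPred, not_nonempty_iff_eq_empty, ← disjoint_iff_inter_eq_empty,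
    subset_compl_iff_disjoint_right] using isGδ_setOf_subset hU.isClosed_compl

theorem isGδ_setOf_inter_nonempty {C : Set BallInfty} (hC : IsClosed C) :
    IsGδ {F : KB | (F.1 ∩ C).Nonempty} := by
  let _ : MetricSpace BallInfty := metrizableSpaceMetric BallInfty
  have hC_eq : {F : KB | (F.1 ∩ C).Nonempty} =
      ⋂ n : ℕ, {F : KB | (F.1 ∩ thickening (1 / (n + 1)) C).Nonempty} := by
    ext F
    simp only [mem_ofPred_eq, mem_iInter]
    refine ⟨fun h n => h.mono (inter_subset_inter_right _ (self_subset_thickening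
      (by positivity) C)), fun h => F.2.inter_nonempty_of_forall_thickening hC fun δ hδ => ?_⟩
    obtain ⟨n, hn⟩ := exists_nat_one_div_lt hδ
    exact (h n).mono (inter_subset_inter_right _ (thickening_mono hn.le C))
  rw [hC_eq]
  exact .iInter_of_isOpen fun n => isOpen_setOf_inter_nonempty isOpen_thickening

def subbasis : Set (Set KB) :=
  (fun t => {F : KB | F.1 ⊆ ⋃₀ t}) '' {t | t.Finite ∧ t ⊆ 𝓑} ∪
    (fun u => {F : KB | (F.1 ∩ u).Nonempty}) '' 𝓑

theorem countable_subbasis : subbasis.Countable :=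
  ((countable_ofPred_finite_subset (countable_countableBasis _)).image _).union
    ((countable_countableBasis _).image _)

theorem eq_generateFrom_subbasis :
    (inferInstance : TopologicalSpace KB) = generateFrom subbasis := by
  apply le_antisymm
  · refine le_generateFrom ?_
    rintro _ (⟨t, ⟨-, htB⟩, rfl⟩ | ⟨u, hu, rfl⟩)
    exacts [isOpen_setOf_subset (isOpen_sUnion_of_subset_countableBasis htB),
      isOpen_setOf_inter_nonempty (isOpen_of_mem_countableBasis hu)]
  have isOpen_of_subbasic :
      ∀ A : Set KB, (∀ F ∈ A, ∃ s ∈ subbasis, F ∈ s ∧ s ⊆ A) →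
      IsOpen[generateFrom subbasis] A := fun A hA =>
    (@isOpen_iff_forall_mem_open KB (generateFrom subbasis) A).2 fun F hF => by
      obtain ⟨s, hs, hFs, hsA⟩ := hA F hF
      exact ⟨s, hsA, isOpen_generateFrom_of_mem hs, hFs⟩
  refine le_induced_generateFrom (t := generateFrom subbasis) ?_
  rintro _ (⟨V, hV, rfl⟩ | ⟨V, hV, rfl⟩) <;> refine isOpen_of_subbasic _ fun F hF => ?_
  · obtain ⟨t, htB, htfin, htV, hFt⟩ := F.2.exists_finite_subfamily_cover
      (fun _ => isOpen_of_mem_countableBasis) fun x hx =>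
        (isBasis_countableBasis _).exists_subset_of_mem_open (hF hx) hV
    exact ⟨_, Or.inl ⟨t, ⟨htfin, htB⟩, rfl⟩, hFt,
      fun G hG => hG.trans (sUnion_subset htV)⟩
  · obtain ⟨x, hxF, hxV⟩ := hF
    obtain ⟨u, hu, hxu, huV⟩ := (isBasis_countableBasis _).exists_subset_of_mem_open hxV hV
    exact ⟨_, Or.inr ⟨u, hu, rfl⟩, ⟨x, hxF, hxu⟩,
      fun G ⟨y, hyG, hyu⟩ => ⟨y, hyG, huV hyu⟩⟩

theorem setOf_lt_linftyDiam_eq (W : Set BallInfty) {δ : ℝ} (hδ : 0 ≤ δ) :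
    {F : KB | δ < linftyDiam (W ∩ F.1)} = ⋃ (n : ℕ) (q : ℚ),
      {F : KB | (F.1 ∩ (W ∩ {x | x.1 n < q})).Nonempty} ∩
        {F : KB | (F.1 ∩ (W ∩ {x | q + δ < x.1 n})).Nonempty} := by
  ext F
  simp only [mem_ofPred_eq, lt_linftyDiam_iff hδ, mem_iUnion, mem_inter_iff, inter_comm W,
    inter_assoc]

theorem isOpen_setOf_lt_linftyDiam {W : Set BallInfty} (hW : IsOpen W) (δ : ℝ) :
    IsOpen {F : KB | δ < linftyDiam (W ∩ F.1)} := by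
  rcases lt_or_ge δ 0 with hδ | hδ
  · simp only [hδ.trans_le (linftyDiam_nonneg _), ofPred_true, isOpen_univ]
  rw [setOf_lt_linftyDiam_eq W hδ]
  exact isOpen_iUnion fun n => isOpen_iUnion fun q =>
    (isOpen_setOf_inter_nonempty (hW.inter (isOpen_setOf_coord_lt n q))).inter
      (isOpen_setOf_inter_nonempty (hW.inter (isOpen_setOf_lt_coord n _)))

theorem isGδ_setOf_linftyDiam_le {W : Set BallInfty} (hW : IsOpen W) {δ : ℝ} (hδ : 0 ≤ δ) :
    IsGδ {F : KB | linftyDiam (W ∩ F.1) ≤ δ} := by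
  simp only [← not_lt, ← compl_ofPred, setOf_lt_linftyDiam_eq W hδ, compl_iUnion, compl_inter]
  exact .iInter fun n => .iInter fun q =>
    (isGδ_compl_setOf_inter_nonempty (hW.inter (isOpen_setOf_coord_lt n q))).union
      (isGδ_compl_setOf_inter_nonempty (hW.inter (isOpen_setOf_lt_coord n _)))

theorem isGδσ_setOf_linftyDiam_lt {W : Set BallInfty} (hW : IsOpen W) (ε : ℝ) :
    IsGδσ {F : KB | linftyDiam (W ∩ F.1) < ε} := by
  have hε_eq : {F : KB | linftyDiam (W ∩ F.1) < ε} =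
      ⋃ q ∈ {q : ℚ | 0 ≤ (q : ℝ) ∧ (q : ℝ) < ε},
        {F : KB | linftyDiam (W ∩ F.1) ≤ q} := by
    ext F
    simp only [mem_ofPred_eq, mem_iUnion, exists_prop]
    refine ⟨fun h => ?_, fun ⟨q, ⟨_, hqε⟩, hq⟩ => hq.trans_lt hqε⟩
    obtain ⟨q, hdq, hqε⟩ := exists_rat_btwn h
    exact ⟨q, ⟨(linftyDiam_nonneg _).trans hdq.le, hqε⟩, hdq.le⟩
  rw [hε_eq]
  exact .biUnion (to_countable _) fun q hq => (isGδ_setOf_linftyDiam_le hW hq.1).isGδσ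

theorem isGδ_setOf_le_linftyDiam {W : Set BallInfty} (hW : IsOpen W) (ε : ℝ) :
    IsGδ {F : KB | ε ≤ linftyDiam (W ∩ F.1)} := by
  have hε_eq : {F : KB | ε ≤ linftyDiam (W ∩ F.1)} =
      ⋂ q ∈ {q : ℚ | (q : ℝ) < ε}, {F : KB | (q : ℝ) < linftyDiam (W ∩ F.1)} := by
    ext F
    simp only [mem_ofPred_eq, mem_iInter]
    exact ⟨fun h q hq => hq.trans_le h,
      fun h => le_of_forall_rat_lt_imp_le fun q hq => (h q hq).le⟩
  rw [hε_eq]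
  exact .biInter_of_isOpen (to_countable _) fun q _ => isOpen_setOf_lt_linftyDiam hW q

end KB

open KB

section Szlenk

variable (ε : ℝ)

theorem szlenkD_eq (F : Set BallInfty) :
    szlenkD ε F = F \ ⋃₀ {V | IsOpen V ∧ linftyDiam (V ∩ F) < ε} := by
  ext x
  simp only [szlenkD, mem_sdiff, mem_sUnion, mem_ofPred_eq, not_exists, not_and]
  exact and_congr_right fun _ => forall_congr' fun V =>
    ⟨fun h ⟨hV, hVε⟩ hxV => (h hV hxV).not_gt hVε,
      fun h hV hxV => le_of_not_gt fun hVε => h ⟨hV, hVε⟩ hxV⟩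

theorem IsCompact.szlenkD {F : Set BallInfty} (hF : IsCompact F) : IsCompact (szlenkD ε F) := by
  rw [szlenkD_eq]
  exact hF.diff (isOpen_sUnion fun _ hV => hV.1)

def szlenkMap (F : KB) : KB := ⟨szlenkD ε F.1, F.2.szlenkD ε⟩

theorem exists_mem_countableBasis_linftyDiam_lt {F : Set BallInfty} {x : BallInfty}
    (hxF : x ∈ F) (hx : x ∉ szlenkD ε F) :
    ∃ u ∈ 𝓑, x ∈ u ∧ linftyDiam (u ∩ F) < ε := by
  obtain ⟨V, hV, hxV, hVF⟩ : ∃ V, IsOpen V ∧ x ∈ V ∧ linftyDiam (V ∩ F) < ε := by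
    simpa [szlenkD, hxF] using hx
  obtain ⟨u, hu, hxu, huV⟩ := (isBasis_countableBasis _).exists_subset_of_mem_open hxV hV
  exact ⟨u, hu, hxu, (linftyDiam_mono (inter_subset_inter_left F huV)).trans_lt hVF⟩

theorem exists_finite_cover_linftyDiam_lt {F K : Set BallInfty} (hK : IsCompact K)
    (hKF : K ⊆ F) (hKs : ∀ x ∈ K, x ∉ szlenkD ε F) :
    ∃ t ⊆ 𝓑, t.Finite ∧ (∀ u ∈ t, linftyDiam (u ∩ F) < ε) ∧ K ⊆ ⋃₀ t :=
  hK.exists_finite_subfamily_cover (fun _ => isOpen_of_mem_countableBasis) fun x hx =>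
    exists_mem_countableBasis_linftyDiam_lt ε (hKF hx) (hKs x hx)

theorem isGδσ_setOf_szlenkD_subset {V : Set BallInfty} (hV : IsOpen V) :
    IsGδσ {F : KB | szlenkD ε F.1 ⊆ V} := by
  have hV_eq : {F : KB | szlenkD ε F.1 ⊆ V} = ⋃ t ∈ {t | t.Finite ∧ t ⊆ 𝓑},
        ({F : KB | F.1 ⊆ V ∪ ⋃₀ t} ∩
          ⋂ u ∈ t, {F : KB | linftyDiam (u ∩ F.1) < ε}) := by
    ext F
    simp only [mem_ofPred_eq, mem_iUnion, mem_inter_iff, mem_iInter, exists_prop]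
    constructor
    · intro h
      obtain ⟨t, htB, htfin, htdiam, ht⟩ := exists_finite_cover_linftyDiam_lt ε (F.2.diff hV)
        sdiff_subset fun x hx hx' => hx.2 (h hx')
      exact ⟨t, ⟨htfin, htB⟩,
        fun x hx => (em (x ∈ V)).imp_right fun hxV => ht ⟨hx, hxV⟩, htdiam⟩
    · rintro ⟨t, ⟨-, htB⟩, hcov, hdiam⟩ x hx
      obtain hxV | ⟨u, hut, hxu⟩ := hcov hx.1
      · exact hxV
      · exact absurd (hx.2 u (isOpen_of_mem_countableBasis (htB hut)) hxu) (hdiam u hut).not_ge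
  rw [hV_eq]
  exact .biUnion (countable_ofPred_finite_subset (countable_countableBasis _)) fun t ht =>
    have hcov : IsOpen (V ∪ ⋃₀ t) := hV.union (isOpen_sUnion_of_subset_countableBasis ht.2)
    (isOpen_setOf_subset hcov).isGδ.isGδσ.inter <| .biInter ht.1 fun u hu =>
      isGδσ_setOf_linftyDiam_lt (isOpen_of_mem_countableBasis (ht.2 hu)) ε

theorem isGδ_setOf_szlenkD_inter_nonempty {C : Set BallInfty} (hC : IsClosed C) :
    IsGδ {F : KB | (szlenkD ε F.1 ∩ C).Nonempty} := by
  have hC_eq : {F : KB | (szlenkD ε F.1 ∩ C).Nonempty} = ⋂ t ∈ {t | t.Finite ∧ t ⊆ 𝓑},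
      ({F : KB | (F.1 ∩ (C \ ⋃₀ t)).Nonempty} ∪
        ⋃ u ∈ t, {F : KB | ε ≤ linftyDiam (u ∩ F.1)}) := by
    ext F
    simp only [mem_ofPred_eq, mem_iInter, mem_union, mem_iUnion, exists_prop]
    constructor
    · rintro ⟨x, hx, hxC⟩ t ⟨-, htB⟩
      by_cases hxt : x ∈ ⋃₀ t
      · obtain ⟨u, hut, hxu⟩ := hxt
        exact Or.inr ⟨u, hut, hx.2 u (isOpen_of_mem_countableBasis (htB hut)) hxu⟩
      · exact Or.inl ⟨x, hx.1, hxC, hxt⟩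
    · intro h
      by_contra hF
      obtain ⟨t, htB, htfin, htdiam, ht⟩ := exists_finite_cover_linftyDiam_lt ε
        (F.2.inter_right hC) inter_subset_left fun x hx hx' => hF ⟨x, hx', hx.2⟩
      rcases h t ⟨htfin, htB⟩ with ⟨x, hxF, hxC, hxt⟩ | ⟨u, hut, hu⟩
      · exact hxt (ht ⟨hxF, hxC⟩)
      · exact (htdiam u hut).not_ge hu
  rw [hC_eq]
  exact .biInter (countable_ofPred_finite_subset (countable_countableBasis _)) fun t ht =>
    (isGδ_setOf_inter_nonempty (hC.sdiff (isOpen_sUnion_of_subset_countableBasis ht.2))).union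
      (.biUnion ht.1 fun u hu =>
        isGδ_setOf_le_linftyDiam (isOpen_of_mem_countableBasis (ht.2 hu)) ε)

theorem isGδσ_setOf_szlenkD_inter_nonempty {V : Set BallInfty} (hV : IsOpen V) :
    IsGδσ {F : KB | (szlenkD ε F.1 ∩ V).Nonempty} := by
  have hV_eq : {F : KB | (szlenkD ε F.1 ∩ V).Nonempty} =
      ⋃ u ∈ {u ∈ 𝓑 | closure u ⊆ V},
        {F : KB | (szlenkD ε F.1 ∩ closure u).Nonempty} := by
    ext F
    simp only [mem_ofPred_eq, mem_iUnion, exists_prop]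
    constructor
    · rintro ⟨x, hx, hxV⟩
      obtain ⟨u, hu, hxu, huV⟩ :=
        (isBasis_countableBasis _).exists_closure_subset (hV.mem_nhds hxV)
      exact ⟨u, ⟨hu, huV⟩, x, hx, subset_closure hxu⟩
    · rintro ⟨u, ⟨-, huV⟩, x, hx, hxu⟩
      exact ⟨x, hx, huV hxu⟩
  rw [hV_eq]
  exact .biUnion ((countable_countableBasis _).mono (sep_subset _ _)) fun u _ =>
    (isGδ_setOf_szlenkD_inter_nonempty ε isClosed_closure).isGδσ

theorem isGδσ_preimage_szlenkMap {U : Set KB} (hU : IsOpen U) :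
    IsGδσ (szlenkMap ε ⁻¹' U) := by
  refine isGδσ_preimage_of_eq_generateFrom countable_subbasis eq_generateFrom_subbasis ?_ hU
  rintro _ (⟨t, ⟨-, htB⟩, rfl⟩ | ⟨u, hu, rfl⟩)
  exacts [isGδσ_setOf_szlenkD_subset ε (isOpen_sUnion_of_subset_countableBasis htB),
    isGδσ_setOf_szlenkD_inter_nonempty ε (isOpen_of_mem_countableBasis hu)]

end Szlenk

theorem stmt14_general (ε : ℝ) :
    ∀ U : Set (Set BallInfty), IsOpen[vietoris BallInfty] U →
      ∃ V : ℕ → ℕ → Set KB, (∀ n m, IsOpen (V n m)) ∧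
        {F : KB | szlenkD ε F.1 ∈ U} = ⋃ n, ⋂ m, V n m := fun _ hU =>
  (isGδσ_preimage_szlenkMap ε (isOpen_setOf_mem hU)).exists_eq_iUnion_iInter_nat

/-- The Szlenk derivation map `s_ε : F ↦ F'_ε` on `K(B_{ℓ∞})` is `Σ⁰₃`-measurable: the
preimage of every Vietoris-open set is a countable union of countable intersections of
open sets. -/
theorem stmt14 (ε : ℝ) (hε : 0 < ε) :
    ∀ U : Set (Set BallInfty), IsOpen[vietoris BallInfty] U →
      ∃ V : ℕ → ℕ → Set KB, (∀ n m, IsOpen (V n m)) ∧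
        {F : KB | szlenkD ε F.1 ∈ U} = ⋃ n, ⋂ m, V n m :=
  stmt14_general ε
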